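/- For all integers m and e, the tetrahedral index satisfies the three-term recurrence in the second variable: I_Δ(m, e+1) + (u^{2e+m} - u^{-m} - u^{m}) · I_Δ(m,e) + I_Δ(m, e-1) = 0, where u plays the role of q^{1/2} (so u^{2e+m} = q^{e+m/2}, u^{±m} = q^{±m/2}). -/

import Mathlib

open scoped BigOperators

/-- Finite q-Pochhammer symbol `(a;q)_n = ∏_{i=0}^{n-1} (1 - a q^i)`. -/
noncomputable def qPoch (a q : ℂ) (n : ℕ) : ℂ :=
  ∏ i ∈ Finset.range n, (1 - a * q ^ i)

/-- Infinite q-Pochhammer symbol `(a;q)_∞ = ∏_{i=0}^{∞} (1 - a q^i)`. -/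
noncomputable def qPochInf (a q : ℂ) : ℂ :=
  ∏' i : ℕ, (1 - a * q ^ i)

/-- The `n`-th term of the series defining the tetrahedral index `I_Δ(m,e)`,
with `q = u^2` and vanishing below `e₊ = max(-e,0)`. -/
noncomputable def tetTerm (u : ℂ) (m e : ℤ) (n : ℕ) : ℂ :=
  if (-e).toNat ≤ n then
    (-1 : ℂ) ^ n * u ^ ((n : ℤ) * ((n : ℤ) + 1) - (2 * (n : ℤ) + e) * m) /
      (qPoch (u ^ 2) (u ^ 2) n * qPoch (u ^ 2) (u ^ 2) ((n : ℤ) + e).toNat)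
  else 0

/-- The tetrahedral index `I_Δ(m,e) = Σ_{n=e₊}^∞ (-1)^n u^{n(n+1)-(2n+e)m}/((q;q)_n (q;q)_{n+e})`. -/
noncomputable def tetIndex (u : ℂ) (m e : ℤ) : ℂ := ∑' n : ℕ, tetTerm u m e n

/-! The summands `T_e(n)` of `I_Δ(m,e)` satisfy, for every `n` (also below the cut-off `e₊`),
`T_e(n) = u^m (1 - q^{n+e+1}) T_{e+1}(n)` and `(1 - q^{n+1}) T_e(n+1) = -u^{2n+2-m} T_{e+1}(n)`.
Writing all terms through `T_{e+1}(n)`, the three-term combination of summands becomes the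
telescoping difference `S(n) - S(n+1)` with `S(n) = u^{m+2e} (1 - q^n) T_e(n)`. As `S(0) = 0` and
`S(n) → 0`, the combined series sums to `0`. Each series converges by the ratio test, consecutive
terms having ratio `O(|q|^n)`. -/

open Filter Topology

lemma hasSum_sub_succ_of_tendsto {G : Type*} [AddCommGroup G] [TopologicalSpace G]
    [IsTopologicalAddGroup G] [T2Space G] {f : ℕ → G} {l : G}
    (hs : Summable fun n => f n - f (n + 1)) (hf : Tendsto f atTop (𝓝 l)) :
    HasSum (fun n => f n - f (n + 1)) (f 0 - l) := by
  rw [hs.hasSum_iff_tendsto_nat]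
  simp_rw [Finset.sum_range_sub']
  exact tendsto_const_nhds.sub hf

lemma norm_sq_lt_one {u : ℂ} (hu : ‖u‖ < 1) : ‖u ^ 2‖ < 1 := by
  rw [norm_pow]
  exact pow_lt_one₀ (norm_nonneg u) hu two_ne_zero

lemma one_sub_norm_le_norm_one_sub_pow {q : ℂ} (hq : ‖q‖ ≤ 1) {j : ℕ} (hj : j ≠ 0) :
    1 - ‖q‖ ≤ ‖1 - q ^ j‖ :=
  calc 1 - ‖q‖ ≤ ‖(1 : ℂ)‖ - ‖q ^ j‖ := by
        rw [norm_one, norm_pow]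
        gcongr
        exact pow_le_of_le_one (norm_nonneg q) hq hj
    _ ≤ ‖1 - q ^ j‖ := norm_sub_norm_le _ _

lemma one_sub_pow_ne_zero {q : ℂ} (hq : ‖q‖ < 1) {j : ℕ} (hj : j ≠ 0) : 1 - q ^ j ≠ 0 :=
  norm_pos_iff.mp ((sub_pos.mpr hq).trans_le (one_sub_norm_le_norm_one_sub_pow hq.le hj))

lemma qPoch_succ (a q : ℂ) (n : ℕ) : qPoch a q (n + 1) = qPoch a q n * (1 - a * q ^ n) :=
  Finset.prod_range_succ _ _

lemma qPoch_ne_zero {a q : ℂ} (ha : ‖a‖ < 1) (hq : ‖q‖ ≤ 1) (n : ℕ) : qPoch a q n ≠ 0 := by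
  refine Finset.prod_ne_zero_iff.mpr fun i _ => sub_ne_zero.mpr fun h => ?_
  have : ‖a * q ^ i‖ < 1 := by
    rw [norm_mul, norm_pow]
    exact mul_lt_one_of_nonneg_of_lt_one_left (norm_nonneg a) ha
      (pow_le_one₀ (norm_nonneg q) hq)
  simp [← h] at this

noncomputable def tetTelescoping (u : ℂ) (m e : ℤ) (n : ℕ) : ℂ :=
  u ^ (m + 2 * e) * (1 - (u ^ 2) ^ n) * tetTerm u m e n

section tetTerm

variable {u : ℂ} {m e : ℤ} {n : ℕ}

lemma tetTerm_of_add_eq {k : ℕ} (hk : (n : ℤ) + e = k) :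
    tetTerm u m e n = (-1) ^ n * u ^ ((n : ℤ) * (n + 1) - (2 * n + e) * m) /
      (qPoch (u ^ 2) (u ^ 2) n * qPoch (u ^ 2) (u ^ 2) k) := by
  rw [tetTerm, if_pos (by omega), hk, Int.toNat_natCast]

lemma tetTerm_of_add_neg (h : (n : ℤ) + e < 0) : tetTerm u m e n = 0 :=
  if_neg (by omega)

lemma tetTerm_eq_mul_tetTerm_add_one (hu0 : u ≠ 0) (hu1 : ‖u‖ < 1) :
    tetTerm u m e n = u ^ m * (1 - (u ^ 2) ^ ((n : ℤ) + e + 1)) * tetTerm u m (e + 1) n := by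
  rcases lt_trichotomy ((n : ℤ) + e + 1) 0 with h | h | h
  · rw [tetTerm_of_add_neg (by omega), tetTerm_of_add_neg (by omega), mul_zero]
  · rw [tetTerm_of_add_neg (by omega), h]
    simp
  · obtain ⟨k, hk⟩ : ∃ k : ℕ, (n : ℤ) + e = k := ⟨((n : ℤ) + e).toNat, by omega⟩
    have hq := norm_sq_lt_one hu1
    rw [tetTerm_of_add_eq hk, tetTerm_of_add_eq (k := k + 1) (by push_cast; omega),
      qPoch_succ, ← pow_succ', hk, ← Nat.cast_succ k, zpow_natCast,
      show (n : ℤ) * (n + 1) - (2 * n + e) * m =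
        (n : ℤ) * (n + 1) - (2 * n + (e + 1)) * m + m by ring,
      zpow_add₀ hu0]
    have hPn := qPoch_ne_zero hq hq.le n
    have hPk := qPoch_ne_zero hq hq.le k
    have hfactor := one_sub_pow_ne_zero hq k.succ_ne_zero
    field_simp

lemma tetTerm_succ_mul (hu0 : u ≠ 0) (hu1 : ‖u‖ < 1) :
    tetTerm u m e (n + 1) * (1 - (u ^ 2) ^ (n + 1)) =
      -u ^ (2 * (n : ℤ) + 2 - m) * tetTerm u m (e + 1) n := by
  rcases lt_or_ge ((n : ℤ) + e + 1) 0 with h | h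
  · rw [tetTerm_of_add_neg (by push_cast; omega), tetTerm_of_add_neg (by omega)]
    simp
  · obtain ⟨k, hk⟩ : ∃ k : ℕ, (n : ℤ) + e + 1 = k := ⟨((n : ℤ) + e + 1).toNat, by omega⟩
    have hq := norm_sq_lt_one hu1
    rw [tetTerm_of_add_eq (k := k) (by push_cast; omega), tetTerm_of_add_eq (k := k) (by omega),
      qPoch_succ, ← pow_succ',
      show ((n + 1 : ℕ) : ℤ) * ((n + 1 : ℕ) + 1) - (2 * (n + 1 : ℕ) + e) * m =
        (n : ℤ) * (n + 1) - (2 * n + (e + 1)) * m + (2 * n + 2 - m) by push_cast; ring,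
      zpow_add₀ hu0]
    have hPn := qPoch_ne_zero hq hq.le n
    have hPk := qPoch_ne_zero hq hq.le k
    have hfactor := one_sub_pow_ne_zero hq n.succ_ne_zero
    field_simp
    ring

lemma tetTerm_recurrence_eq_tetTelescoping_sub (hu0 : u ≠ 0) (hu1 : ‖u‖ < 1) :
    tetTerm u m (e + 1) n + (u ^ (2 * e + m) - u ^ (-m) - u ^ m) * tetTerm u m e n +
      tetTerm u m (e - 1) n = tetTelescoping u m e n - tetTelescoping u m e (n + 1) := by
  have hdown := tetTerm_eq_mul_tetTerm_add_one (m := m) (e := e - 1) (n := n) hu0 hu1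
  rw [sub_add_cancel] at hdown
  rw [tetTelescoping, tetTelescoping, hdown,
    tetTerm_eq_mul_tetTerm_add_one (e := e) (n := n) hu0 hu1]
  linear_combination (norm := skip)
    u ^ (m + 2 * e) * tetTerm_succ_mul (m := m) (e := e) (n := n) hu0 hu1
  have hq0 : u ^ 2 ≠ 0 := pow_ne_zero 2 hu0
  simp only [zpow_add₀ hu0, zpow_sub₀ hu0, zpow_neg, zpow_mul, zpow_ofNat, zpow_add₀ hq0,
    zpow_sub₀ hq0, zpow_natCast]
  field_simp
  ring

lemma tetTerm_succ_mul_mul (hu0 : u ≠ 0) (hu1 : ‖u‖ < 1) :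
    tetTerm u m e (n + 1) * ((1 - (u ^ 2) ^ (n + 1)) * (1 - (u ^ 2) ^ ((n : ℤ) + e + 1))) =
      -(u ^ 2) ^ n * u ^ (2 - 2 * m) * tetTerm u m e n := by
  rw [tetTerm_eq_mul_tetTerm_add_one (e := e) (n := n) hu0 hu1]
  linear_combination (norm := skip) (1 - (u ^ 2) ^ ((n : ℤ) + e + 1)) *
    tetTerm_succ_mul (m := m) (e := e) (n := n) hu0 hu1
  simp only [zpow_sub₀ hu0, zpow_add₀ hu0, zpow_mul', zpow_ofNat, zpow_add₀ (pow_ne_zero 2 hu0),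
    zpow_natCast]
  field_simp
  ring

lemma norm_tetTerm_succ_le (hu0 : u ≠ 0) (hu1 : ‖u‖ < 1) (h : 0 ≤ (n : ℤ) + e) :
    (1 - ‖u ^ 2‖) ^ 2 * ‖tetTerm u m e (n + 1)‖ ≤
      ‖u ^ 2‖ ^ n * ‖u ^ (2 - 2 * m)‖ * ‖tetTerm u m e n‖ := by
  obtain ⟨k, hk⟩ : ∃ k : ℕ, (n : ℤ) + e + 1 = k := ⟨((n : ℤ) + e + 1).toNat, by omega⟩
  have hq := (norm_sq_lt_one hu1).le
  have hn := one_sub_norm_le_norm_one_sub_pow hq n.succ_ne_zero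
  have hk' := one_sub_norm_le_norm_one_sub_pow hq (j := k) (by omega)
  have hratio := congrArg norm (tetTerm_succ_mul_mul (m := m) (e := e) (n := n) hu0 hu1)
  rw [hk, zpow_natCast, norm_mul, norm_mul, norm_mul, norm_mul, norm_neg, norm_pow] at hratio
  rw [← hratio, sq, mul_comm]
  gcongr

lemma summable_tetTerm (hu0 : u ≠ 0) (hu1 : ‖u‖ < 1) : Summable (tetTerm u m e) := by
  have hq := norm_sq_lt_one hu1
  have hr : 0 < (1 - ‖u ^ 2‖) ^ 2 := by have := sub_pos.mpr hq; positivity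
  have hlim : Tendsto (fun n : ℕ => ‖u ^ 2‖ ^ n * ‖u ^ (2 - 2 * m)‖) atTop (𝓝 0) := by
    simpa using (tendsto_pow_atTop_nhds_zero_of_lt_one (norm_nonneg _) hq).mul_const _
  refine summable_of_ratio_norm_eventually_le (r := 1 / 2) (by norm_num) ?_
  filter_upwards [hlim.eventually_lt_const (half_pos hr), eventually_ge_atTop (-e).toNat]
    with n hsmall hn
  have := (norm_tetTerm_succ_le hu0 hu1 (by omega)).trans
    (mul_le_mul_of_nonneg_right hsmall.le (norm_nonneg (tetTerm u m e n)))
  rw [show (1 - ‖u ^ 2‖) ^ 2 / 2 * ‖tetTerm u m e n‖ =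
    (1 - ‖u ^ 2‖) ^ 2 * (1 / 2 * ‖tetTerm u m e n‖) by ring] at this
  exact le_of_mul_le_mul_left this hr

lemma tendsto_tetTelescoping (hu0 : u ≠ 0) (hu1 : ‖u‖ < 1) :
    Tendsto (tetTelescoping u m e) atTop (𝓝 0) := by
  unfold tetTelescoping
  simpa using (tendsto_const_nhds.mul (tendsto_const_nhds.sub
    (tendsto_pow_atTop_nhds_zero_of_norm_lt_one (norm_sq_lt_one hu1)))).mul
    (summable_tetTerm (m := m) (e := e) hu0 hu1).tendsto_atTop_zero

end tetTerm

/-- three-term recurrence in `e`: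
`I_Δ(m,e+1) + (q^{e+m/2} - q^{-m/2} - q^{m/2}) I_Δ(m,e) + I_Δ(m,e-1) = 0`, `u = q^{1/2}`. -/
theorem stmt_5 (u : ℂ) (hu0 : 0 < ‖u‖) (hu1 : ‖u‖ < 1) (m e : ℤ) :
    tetIndex u m (e + 1) + (u ^ (2 * e + m) - u ^ (-m) - u ^ m) * tetIndex u m e +
      tetIndex u m (e - 1) = 0 := by
  have hu : u ≠ 0 := norm_pos_iff.mp hu0
  have hsum := ((summable_tetTerm (m := m) (e := e + 1) hu hu1).hasSum.add
    ((summable_tetTerm (m := m) (e := e) hu hu1).hasSum.mul_left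
      (u ^ (2 * e + m) - u ^ (-m) - u ^ m))).add
    (summable_tetTerm (m := m) (e := e - 1) hu hu1).hasSum
  simp only [tetTerm_recurrence_eq_tetTelescoping_sub hu hu1] at hsum
  have htelescope := hsum.unique
    (hasSum_sub_succ_of_tendsto hsum.summable (tendsto_tetTelescoping hu hu1))
  simpa [tetIndex, tetTelescoping] using htelescope
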